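/- arXiv:1011.6068 — 3 statements merged into one kernel-verified Lean document; each statement's English description precedes it below -/
import Mathlib

section
/- Let F be a field, n a positive integer, λ = (λ_1^{m_1},...,λ_k^{m_k}) a partition of length l(λ) ≤ n, and s a positive integer with s + l(λ) ≤ n. Then there exist coefficients a_μ, b_ν ∈ F such that m_{(λ_1^s)} · m_λ = C(s+m_1, s) · m_{(λ_1^{s+m_1}, λ_2^{m_2},...,λ_k^{m_k})} + Σ_μ a_μ m_μ + Σ_ν b_ν m_ν, where C(s+m_1, s) is the binomial coefficient (viewed in F), the first sum runs over partitions μ of length at most n with lp(μ) ≥ λ_1, lm(μ) = s and l(μ) = l(λ), and the second sum runs over partitions ν of length at most n with lp(ν) ≥ λ_1 and lm(ν) < s. -/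
open MvPolynomial

/-- The monomial symmetric polynomial in `n` variables attached to the multiset `lam`
(the parts of the partition; zero entries are discarded). -/
noncomputable def mSym (F : Type*) [Field F] (n : ℕ) (lam : Multiset ℕ) :
    MvPolynomial (Fin n) F :=
  msymm (Fin n) F
    (⟨Multiset.filter (0 < ·) lam, fun {_} hx => (Multiset.mem_filter.mp hx).2, rfl⟩ :
      Nat.Partition (Multiset.filter (0 < ·) lam).sum)

/-- The monomial symmetric polynomial, as an element of the subalgebra of
symmetric polynomials. -/
noncomputable def mSymS (F : Type*) [Field F] (n : ℕ) (lam : Multiset ℕ) :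
    symmetricSubalgebra (Fin n) F :=
  ⟨mSym F n lam, msymm_isSymmetric _ _ _⟩

/-- `lam` is (the multiset of parts of) a partition of length at most `n`. -/
def IsPartition (n : ℕ) (lam : Multiset ℕ) : Prop :=
  (∀ x ∈ lam, 0 < x) ∧ Multiset.card lam ≤ n

/-- The leading part `lp` of a partition. -/
def leadingPart (lam : Multiset ℕ) : ℕ := lam.sup

/-- The leading multiplicity `lm` of a partition. -/
def leadingMult (lam : Multiset ℕ) : ℕ := lam.count lam.sup

/-- The ideal `I_{n,d}` of truncated symmetric polynomials: the intersection of
`(x_1^{d+1}, …, x_n^{d+1})` with the subring of symmetric polynomials. -/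
noncomputable def truncIdeal (F : Type*) [Field F] (n d : ℕ) :
    Ideal (symmetricSubalgebra (Fin n) F) :=
  Ideal.comap (symmetricSubalgebra (Fin n) F).val
    (Ideal.span (Set.range fun i : Fin n => (X i : MvPolynomial (Fin n) F) ^ (d + 1)))

/-- Pad a multiset with zeros to size `n`. -/
def pad (n : ℕ) (lam : Multiset ℕ) : Multiset ℕ :=
  lam + Multiset.replicate (n - Multiset.card lam) 0

/-- The `n`-tuple `(λ_1, …, λ_n)`: the parts of `lam` padded with zeros and sorted
in nonincreasing order. -/
def sortedTuple (n : ℕ) (lam : Multiset ℕ) : Fin n → ℕ :=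
  fun i => (((pad n lam).sort (· ≤ ·)).reverse).getD i 0

/-- The partition `(a_0^{m_0}, …, a_k^{m_k})` having `m i` parts equal to `a i`. -/
def ofParts {k : ℕ} (a m : Fin k → ℕ) : Multiset ℕ :=
  ∑ i, Multiset.replicate (m i) (a i)

/-!
The coefficient of `x^f` in `m_{(A^s)} · m_L` counts the ways to write `f = g + h` with `g` of
shape `(A^s)` and `h` of shape `L`; as the product is symmetric, it is the combination of the
`m_μ` with these counts as coefficients. If no value of `f` exceeds `A = λ_1`, then `g` and `h`
have disjoint supports, so `f` has shape `L + (A^s)`, and the splits correspond to the `s`-subsets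
of the `s + m_1` places where `f` equals `A`. Otherwise the largest value of `f` exceeds `A`, so
it is attained only on the support of `g`: at most `s` times, and exactly `s` times only when `f`
and `h` have the same support.
-/

open Finset

namespace Finsupp

variable {σ : Type*}

/-- The partition `λ` such that the monomial `x^f` occurs in `m_λ`. -/
def shape (f : σ →₀ ℕ) : Multiset ℕ := f.support.val.map f

variable {f g h : σ →₀ ℕ} {μ ν L : Multiset ℕ} {s A : ℕ}

theorem pos_of_mem_shape {v : ℕ} (hv : v ∈ f.shape) : 0 < v := by
  obtain ⟨i, hi, rfl⟩ := Multiset.mem_map.mp hv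
  exact Nat.pos_of_ne_zero (mem_support_iff.mp hi)

theorem card_shape : Multiset.card f.shape = #f.support := Multiset.card_map _ _

theorem count_shape (v : ℕ) : f.shape.count v = #{i ∈ f.support | f i = v} := by
  classical
  rw [shape, Multiset.count_map]
  simp only [eq_comm (a := v)]
  rfl

theorem sum_shape : f.shape.sum = f.sum fun _ => id := rfl

theorem le_sup_shape (i : σ) : f i ≤ f.shape.sup := by
  by_cases hi : i ∈ f.support
  · exact Multiset.le_sup (Multiset.mem_map_of_mem f hi)
  · simp [notMem_support_iff.mp hi]

theorem shape_eq_replicate_iff :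
    f.shape = Multiset.replicate s A ↔ #f.support = s ∧ ∀ i ∈ f.support, f i = A := by
  simp [Multiset.eq_replicate, shape]

theorem shape_add_of_disjoint (hd : Disjoint g.support h.support) :
    (g + h).shape = g.shape + h.shape := by
  classical
  rw [shape, support_add_eq hd, ← Finset.disjUnion_eq_union _ _ hd, Finset.disjUnion_val,
    Multiset.map_add]
  congr 1 <;> refine Multiset.map_congr rfl fun i hi => ?_
  · simp [notMem_support_iff.mp (Finset.disjoint_left.mp hd hi)]
  · simp [notMem_support_iff.mp (Finset.disjoint_right.mp hd hi)]

theorem exists_perm_of_shape_eq [Fintype σ] (hfg : f.shape = g.shape) :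
    ∃ e : Equiv.Perm σ, ∀ i, g (e i) = f i := by
  classical
  have hfiber : ∀ v, #{i | f i = v} = #{i | g i = v} := by
    intro v
    rcases eq_or_ne v 0 with rfl | hv
    · have hzero : ∀ d : σ →₀ ℕ, #{i | d i = 0} = Fintype.card σ - Multiset.card d.shape := by
        intro d
        rw [card_shape, ← Finset.card_compl]
        congr 1; ext; simp
      rw [hzero, hzero, hfg]
    · have hpos : ∀ d : σ →₀ ℕ, #{i | d i = v} = d.shape.count v := by
        intro d
        rw [count_shape]
        congr 1; ext i; simp only [Finset.mem_filter, Finset.mem_univ, true_and, mem_support_iff]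
        exact ⟨fun hd => ⟨hd ▸ hv, hd⟩, And.right⟩
      rw [hpos, hpos, hfg]
  exact ⟨Equiv.ofFiberEquiv fun v => Fintype.equivOfCardEq (by
    simpa only [Fintype.card_subtype] using hfiber v), fun i => Equiv.ofFiberEquiv_map _ i⟩

theorem support_indicator_const (hA : A ≠ 0) (S : Finset σ) :
    (indicator S fun _ _ => A).support = S := by
  classical
  ext i
  simp [indicator_apply, hA]

theorem shape_indicator_const (hA : A ≠ 0) (S : Finset σ) :
    (indicator S fun _ _ => A).shape = Multiset.replicate #S A :=
  shape_eq_replicate_iff.mpr ⟨by rw [support_indicator_const hA], fun i hi => by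
    rw [support_indicator_const hA] at hi
    exact indicator_of_mem hi _⟩

theorem indicator_support_of_shape_eq_replicate (hg : g.shape = Multiset.replicate s A) :
    (indicator g.support fun _ _ => A) = g := by
  ext i
  by_cases hi : i ∈ g.support
  · rw [indicator_of_mem hi, (shape_eq_replicate_iff.mp hg).2 i hi]
  · rw [indicator_of_notMem hi, notMem_support_iff.mp hi]

theorem shape_add_of_sup_le (hg : g.shape = Multiset.replicate s A)
    (hle : (g + h).shape.sup ≤ A) : (g + h).shape = h.shape + Multiset.replicate s A := by
  have hd : Disjoint g.support h.support := by
    refine Finset.disjoint_left.mpr fun i hi => notMem_support_iff.mpr ?_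
    have hle_i : g i + h i ≤ A := (le_sup_shape i).trans hle
    have hgi := (shape_eq_replicate_iff.mp hg).2 i hi
    omega
  rw [shape_add_of_disjoint hd, hg, add_comm]

theorem leadingMult_shape_add_le (hg : g.shape = Multiset.replicate s A) (hh : ∀ i, h i ≤ A)
    (hlt : A < (g + h).shape.sup) :
    leadingMult (g + h).shape ≤ s ∧
      (leadingMult (g + h).shape = s → #(g + h).support = #h.support) := by
  obtain ⟨hcard, hval⟩ := shape_eq_replicate_iff.mp hg
  set M := (g + h).shape.sup
  have hK : {i ∈ (g + h).support | (g + h) i = M} ⊆ g.support := by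
    intro i hi
    have hM : g i + h i = M := (Finset.mem_filter.mp hi).2
    have hhi := hh i
    exact mem_support_iff.mpr (by omega)
  rw [leadingMult, count_shape, ← hcard]
  refine ⟨Finset.card_le_card hK, fun heq => congrArg _ (Finset.ext fun i => ?_)⟩
  have hKg := Finset.eq_of_subset_of_card_le hK heq.ge
  have hgi : i ∈ g.support → g i + h i = M ∧ g i = A := fun hi =>
    ⟨(Finset.mem_filter.mp (hKg.superset hi)).2, hval i hi⟩
  simp only [mem_support_iff, coe_add, Pi.add_apply] at hgi ⊢
  omega

theorem apply_le_of_shape_eq_add_replicate (hf : f.shape = L + Multiset.replicate s A)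
    (hLA : ∀ x ∈ L, x ≤ A) (i : σ) : f i ≤ A := by
  refine (le_sup_shape i).trans (Multiset.sup_le.mpr fun x hx => ?_)
  rw [hf, Multiset.mem_add] at hx
  exact hx.elim (hLA x) fun hx => (Multiset.eq_of_mem_replicate hx).le

variable [DecidableEq σ]

noncomputable def shapeSplits (μ ν : Multiset ℕ) (f : σ →₀ ℕ) :
    Finset ((σ →₀ ℕ) × (σ →₀ ℕ)) :=
  {p ∈ antidiagonal f | p.1.shape = μ ∧ p.2.shape = ν}

theorem mem_shapeSplits :
    (g, h) ∈ shapeSplits μ ν f ↔ g + h = f ∧ g.shape = μ ∧ h.shape = ν := by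
  simp [shapeSplits]

theorem lt_leadingPart_of_mem_shapeSplits (hLA : ∀ x ∈ L, x ≤ A)
    (hp : (g, h) ∈ shapeSplits (Multiset.replicate s A) L f)
    (hf : f.shape ≠ L + Multiset.replicate s A) :
    A < leadingPart f.shape ∧
      (leadingMult f.shape = s ∧ Multiset.card f.shape = Multiset.card L ∨
        leadingMult f.shape < s) := by
  obtain ⟨rfl, hg, rfl⟩ := mem_shapeSplits.mp hp
  have hh : ∀ i, h i ≤ A := fun i => (le_sup_shape i).trans (Multiset.sup_le.mpr hLA)
  have hlt : A < (g + h).shape.sup := lt_of_not_ge fun hle => hf (shape_add_of_sup_le hg hle)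
  obtain ⟨hle, hcard⟩ := leadingMult_shape_add_le hg hh hlt
  exact ⟨hlt, hle.eq_or_lt.imp (fun he => ⟨he, by rw [card_shape, card_shape, hcard he]⟩) id⟩

theorem support_subset_of_mem_shapeSplits (hf : f.shape = L + Multiset.replicate s A)
    (hLA : ∀ x ∈ L, x ≤ A) (hp : (g, h) ∈ shapeSplits (Multiset.replicate s A) L f) :
    g.support ⊆ {i ∈ f.support | f i = A} := by
  obtain ⟨rfl, hg, -⟩ := mem_shapeSplits.mp hp
  intro i hi
  have hfi := apply_le_of_shape_eq_add_replicate hf hLA i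
  have hgi := (shape_eq_replicate_iff.mp hg).2 i hi
  have hgi0 := mem_support_iff.mp hi
  simp only [coe_add, Pi.add_apply] at hfi
  have hfi' : g i + h i = A := by omega
  exact Finset.mem_filter.mpr ⟨mem_support_iff.mpr (hfi'.trans_ne (hgi ▸ hgi0)), hfi'⟩

theorem indicator_mem_shapeSplits (hA : A ≠ 0) (hf : f.shape = L + Multiset.replicate s A)
    {S : Finset σ} (hS : ∀ i ∈ S, f i = A) (hcard : #S = s) :
    (indicator S (fun _ _ => A), f - indicator S fun _ _ => A) ∈
      shapeSplits (Multiset.replicate s A) L f := by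
  set g := indicator S fun _ _ => A
  have hle : g ≤ f := fun i => by
    by_cases hi : i ∈ S
    · exact (indicator_of_mem hi _).trans_le (hS i hi).ge
    · exact (indicator_of_notMem hi _).trans_le (Nat.zero_le _)
  have hg : g.shape = Multiset.replicate s A := hcard ▸ shape_indicator_const hA S
  have hd : Disjoint g.support (f - g).support := by
    refine Finset.disjoint_left.mpr fun i hi => notMem_support_iff.mpr ?_
    rw [support_indicator_const hA] at hi
    simp [g, indicator_of_mem hi, hS i hi]
  have hshape := shape_add_of_disjoint hd
  rw [add_tsub_cancel_of_le hle, hf, hg, add_comm] at hshape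
  exact mem_shapeSplits.mpr ⟨add_tsub_cancel_of_le hle, hg, (add_left_cancel hshape).symm⟩

theorem card_shapeSplits_replicate (hA : A ≠ 0) (hf : f.shape = L + Multiset.replicate s A)
    (hLA : ∀ x ∈ L, x ≤ A) :
    #(shapeSplits (Multiset.replicate s A) L f) = (s + L.count A).choose s := by
  have hW : #{i ∈ f.support | f i = A} = s + L.count A := by
    rw [← count_shape, hf, Multiset.count_add, Multiset.count_replicate_self, add_comm]
  rw [← hW, ← Finset.card_powersetCard]
  refine Finset.card_nbij' (fun p => p.1.support)
    (fun S => (indicator S fun _ _ => A, f - indicator S fun _ _ => A)) ?_ ?_ ?_ ?_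
  · rintro ⟨g, h⟩ hp
    obtain ⟨-, hg, -⟩ := mem_shapeSplits.mp hp
    exact Finset.mem_powersetCard.mpr
      ⟨support_subset_of_mem_shapeSplits hf hLA hp, (shape_eq_replicate_iff.mp hg).1⟩
  · intro S hS
    obtain ⟨hSW, hcard⟩ := Finset.mem_powersetCard.mp hS
    exact indicator_mem_shapeSplits hA hf (fun i hi => (Finset.mem_filter.mp (hSW hi)).2) hcard
  · rintro ⟨g, h⟩ hp
    obtain ⟨rfl, hg, -⟩ := mem_shapeSplits.mp hp
    simp [indicator_support_of_shape_eq_replicate hg]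
  · intro S _
    exact support_indicator_const hA S

end Finsupp

namespace MvPolynomial

open Finsupp

variable {σ R : Type*} [CommSemiring R]

theorem prod_map_X_eq_monomial (t : Multiset σ) [DecidableEq σ] :
    (t.map X).prod = monomial (Multiset.toFinsupp t) (1 : R) := by
  rw [Finset.prod_multiset_map_count, monomial_eq, C_1, one_mul, Finsupp.prod]
  rfl

theorem coeff_msymm [Fintype σ] [DecidableEq σ] {n : ℕ} (μ : n.Partition) (f : σ →₀ ℕ) :
    coeff f (msymm σ R μ) = if f.shape = μ.parts then 1 else 0 := by
  have hshape : ∀ t : Sym σ n, (Nat.Partition.ofSym t).parts = (Multiset.toFinsupp t.1).shape :=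
    fun _ => rfl
  simp only [msymm, coeff_sum, prod_map_X_eq_monomial, coeff_monomial]
  split_ifs with hf
  · have hcard : Multiset.card (toMultiset f) = n := by
      rw [card_toMultiset, ← sum_shape, hf, μ.parts_sum]
    let t : {a : Sym σ n // Nat.Partition.ofSym a = μ} :=
      ⟨⟨toMultiset f, hcard⟩, Nat.Partition.ext ((hshape _).trans (by simpa using hf))⟩
    rw [Fintype.sum_eq_single t fun u hu => if_neg fun hu' => hu ?_, if_pos (by simp [t])]
    exact Subtype.ext (Subtype.ext (by simp [t, ← hu']))
  · refine Finset.sum_eq_zero fun u _ => if_neg fun hu => hf ?_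
    rw [← hu, ← hshape, u.2]

theorem IsSymmetric.coeff_eq_of_shape_eq [Fintype σ] {p : MvPolynomial σ R} (hp : p.IsSymmetric)
    {f g : σ →₀ ℕ} (hfg : f.shape = g.shape) : coeff f p = coeff g p := by
  obtain ⟨e, he⟩ := exists_perm_of_shape_eq hfg
  have hg : g = mapDomain e f := by
    ext j
    rw [← equivMapDomain_eq_mapDomain, equivMapDomain_apply, ← he, Equiv.apply_symm_apply]
  rw [hg, ← coeff_rename_mapDomain e e.injective, hp e]

theorem IsSymmetric.exists_finsupp_apply_shape_eq_coeff [Fintype σ] {p : MvPolynomial σ R}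
    (hp : p.IsSymmetric) : ∃ c : Multiset ℕ →₀ R,
      (∀ μ ∈ c.support, ∀ x ∈ μ, 0 < x) ∧ ∀ f, c f.shape = coeff f p := by
  classical
  let c₀ (μ : Multiset ℕ) : R := if h : ∃ f : σ →₀ ℕ, f.shape = μ then coeff h.choose p else 0
  have hc₀ (f : σ →₀ ℕ) : c₀ f.shape = coeff f p := by
    have h : ∃ g : σ →₀ ℕ, g.shape = f.shape := ⟨f, rfl⟩
    simp only [c₀, dif_pos h]
    exact hp.coeff_eq_of_shape_eq h.choose_spec
  have hsupp : ∀ μ, c₀ μ ≠ 0 → μ ∈ p.support.image shape := by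
    intro μ hμ
    by_cases h : ∃ f : σ →₀ ℕ, f.shape = μ
    · obtain ⟨f, rfl⟩ := h
      exact Finset.mem_image_of_mem _ (mem_support_iff.mpr (hc₀ f ▸ hμ))
    · simp [c₀, dif_neg h] at hμ
  refine ⟨Finsupp.onFinset _ c₀ hsupp, fun μ hμ x hx => ?_, hc₀⟩
  obtain ⟨f, -, rfl⟩ := Finset.mem_image.mp (support_onFinset_subset hμ)
  exact pos_of_mem_shape hx

end MvPolynomial

open Finsupp

theorem isPartition_shape {n : ℕ} (f : Fin n →₀ ℕ) : IsPartition n f.shape :=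
  ⟨fun _ => pos_of_mem_shape, card_shape.trans_le (card_finset_fin_le _)⟩

section ofParts

variable {k : ℕ} {a m : Fin k → ℕ}

theorem forall_mem_ofParts {p : ℕ → Prop} (h : ∀ i, p (a i)) : ∀ x ∈ ofParts a m, p x := by
  intro x hx
  obtain ⟨i, -, hi⟩ := Multiset.mem_sum.mp hx
  exact Multiset.eq_of_mem_replicate hi ▸ h i

theorem count_ofParts (ha : Function.Injective a) (i : Fin k) :
    (ofParts a m).count (a i) = m i := by
  simp [ofParts, Multiset.count_sum', Multiset.count_replicate, ha.eq_iff]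

end ofParts

theorem leadingMult_add_replicate {L : Multiset ℕ} {s A : ℕ} (hs : 0 < s)
    (hLA : ∀ x ∈ L, x ≤ A) : leadingMult (L + Multiset.replicate s A) = L.count A + s := by
  have hsup : (L + Multiset.replicate s A).sup = A := by
    refine le_antisymm (Multiset.sup_le.mpr fun x hx => ?_)
      (Multiset.le_sup (Multiset.mem_add.mpr (Or.inr (Multiset.mem_replicate.mpr ⟨hs.ne', rfl⟩))))
    exact (Multiset.mem_add.mp hx).elim (hLA x) fun hx => (Multiset.eq_of_mem_replicate hx).le
  rw [leadingMult, hsup, Multiset.count_add, Multiset.count_replicate_self]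

section MonomialSymmetric

variable {F : Type*} [Field F] {n : ℕ}

theorem mSym_isSymmetric (lam : Multiset ℕ) : (mSym F n lam).IsSymmetric :=
  msymm_isSymmetric _ _ _

theorem coeff_mSym {lam : Multiset ℕ} (hlam : ∀ x ∈ lam, 0 < x) (f : Fin n →₀ ℕ) :
    coeff f (mSym F n lam) = if f.shape = lam then 1 else 0 := by
  rw [mSym, coeff_msymm]
  simp only [Multiset.filter_eq_self.mpr hlam]

theorem coeff_mSym_mul_mSym {μ ν : Multiset ℕ} (hμ : ∀ x ∈ μ, 0 < x) (hν : ∀ x ∈ ν, 0 < x)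
    (f : Fin n →₀ ℕ) : coeff f (mSym F n μ * mSym F n ν) = #(shapeSplits μ ν f) := by
  simp only [coeff_mul, coeff_mSym hμ, coeff_mSym hν, ite_zero_mul_ite_zero, one_mul,
    Finset.sum_boole]
  rfl

theorem coeff_sum_smul_mSym (c : Multiset ℕ →₀ F) (hc : ∀ μ ∈ c.support, ∀ x ∈ μ, 0 < x)
    (f : Fin n →₀ ℕ) : coeff f (c.sum fun μ r => r • mSym F n μ) = c f.shape := by
  rw [Finsupp.sum, coeff_sum]
  have hterm : ∀ μ ∈ c.support, coeff f (c μ • mSym F n μ) = if f.shape = μ then c μ else 0 := by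
    intro μ hμ
    rw [coeff_smul, coeff_mSym (hc μ hμ)]
    split_ifs <;> simp
  exact (Finset.sum_congr rfl hterm).trans (sum_ite_self_eq c f.shape)

theorem coeff_filter_sum_smul_mSym (c : Multiset ℕ →₀ F) (hc : ∀ μ ∈ c.support, ∀ x ∈ μ, 0 < x)
    (p : Multiset ℕ → Prop) [DecidablePred p] (f : Fin n →₀ ℕ) :
    coeff f ((c.filter p).sum fun μ r => r • mSym F n μ) = if p f.shape then c f.shape else 0 :=
  (coeff_sum_smul_mSym _ (fun μ hμ => hc μ (Finset.mem_filter.mp hμ).1) f).trans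
    (filter_apply p c _)

end MonomialSymmetric

theorem mSym_pow_mul_general (F : Type*) [Field F] (n : ℕ)
    (k : ℕ) (a m : Fin (k + 1) → ℕ)
    (ha : StrictAnti a) (hapos : ∀ i, 0 < a i)
    (s : ℕ) (hs : 0 < s) :
    ∃ aC bC : Multiset ℕ →₀ F,
      (∀ mu ∈ aC.support, IsPartition n mu ∧ a 0 ≤ leadingPart mu ∧
        leadingMult mu = s ∧ Multiset.card mu = Multiset.card (ofParts a m)) ∧
      (∀ nu ∈ bC.support, IsPartition n nu ∧ a 0 ≤ leadingPart nu ∧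
        leadingMult nu < s) ∧
      mSym F n (Multiset.replicate s (a 0)) * mSym F n (ofParts a m) =
      (((s + m 0).choose s : F)) • mSym F n (ofParts a m + Multiset.replicate s (a 0))
        + aC.sum (fun mu c => c • mSym F n mu)
        + bC.sum (fun nu c => c • mSym F n nu) := by
  classical
  set L := ofParts a m
  have hLpos : ∀ x ∈ L, 0 < x := forall_mem_ofParts hapos
  have hLA : ∀ x ∈ L, x ≤ a 0 := forall_mem_ofParts fun i => ha.antitone (Fin.zero_le i)
  have hrep : ∀ x ∈ Multiset.replicate s (a 0), 0 < x := fun x hx =>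
    Multiset.eq_of_mem_replicate hx ▸ hapos 0
  obtain ⟨c, hc_pos, hc_coeff⟩ := ((mSym_isSymmetric (F := F) (n := n)
    (Multiset.replicate s (a 0))).mul (mSym_isSymmetric L)).exists_finsupp_apply_shape_eq_coeff
  refine ⟨c.filter fun μ => IsPartition n μ ∧ a 0 ≤ leadingPart μ ∧ leadingMult μ = s ∧
        Multiset.card μ = Multiset.card L,
      c.filter fun μ => IsPartition n μ ∧ a 0 ≤ leadingPart μ ∧ leadingMult μ < s,
      fun μ hμ => (Finset.mem_filter.mp hμ).2, fun μ hμ => (Finset.mem_filter.mp hμ).2, ?_⟩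
  ext f
  rw [coeff_add, coeff_add, coeff_smul, coeff_filter_sum_smul_mSym _ hc_pos,
    coeff_filter_sum_smul_mSym _ hc_pos, hc_coeff, coeff_mSym_mul_mSym hrep hLpos,
    coeff_mSym fun x hx => (Multiset.mem_add.mp hx).elim (hLpos x) (hrep x)]
  by_cases hmain : f.shape = L + Multiset.replicate s (a 0)
  · rw [card_shapeSplits_replicate (hapos 0).ne' hmain hLA, count_ofParts ha.injective]
    simp [hmain, leadingMult_add_replicate hs hLA, hs.ne']
  · rcases (shapeSplits (Multiset.replicate s (a 0)) L f).eq_empty_or_nonempty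
      with h0 | ⟨⟨g, h⟩, hp⟩
    · simp [h0, hmain]
    · obtain ⟨hlt, hlm_eq | hlm_lt⟩ := lt_leadingPart_of_mem_shapeSplits hLA hp hmain
      · simp [hmain, isPartition_shape, hlt.le, hlm_eq]
      · simp [hmain, isPartition_shape, hlt.le, hlm_lt, hlm_lt.ne]

/-- Lemma comp2: expansion of `m_{(λ_1^s)} · m_λ`, with the binomial
coefficient `C(s+m_1, s)` viewed in `F`. The partition `λ = (λ_1^{m_1},…,λ_k^{m_k})`
has distinct parts `a 0 > a 1 > … > a k` indexed by `Fin (k+1)`. -/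
theorem mSym_pow_mul (F : Type*) [Field F] (n : ℕ) (hn : 0 < n)
    (k : ℕ) (a m : Fin (k + 1) → ℕ)
    (ha : StrictAnti a) (hapos : ∀ i, 0 < a i) (hm : ∀ i, 0 < m i)
    (s : ℕ) (hs : 0 < s) (hlen : s + Multiset.card (ofParts a m) ≤ n) :
    ∃ aC bC : Multiset ℕ →₀ F,
      (∀ mu ∈ aC.support, IsPartition n mu ∧ a 0 ≤ leadingPart mu ∧
        leadingMult mu = s ∧ Multiset.card mu = Multiset.card (ofParts a m)) ∧
      (∀ nu ∈ bC.support, IsPartition n nu ∧ a 0 ≤ leadingPart nu ∧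
        leadingMult nu < s) ∧
      mSym F n (Multiset.replicate s (a 0)) * mSym F n (ofParts a m) =
      (((s + m 0).choose s : F)) • mSym F n (ofParts a m + Multiset.replicate s (a 0))
        + aC.sum (fun mu c => c • mSym F n mu)
        + bC.sum (fun nu c => c • mSym F n nu) :=
  mSym_pow_mul_general F n k a m ha hapos s hs
end

section
/- Let F be a field of characteristic p, n a positive integer, and d a nonnegative integer. If p = 0 or n < p, then I_{n,d} = (m_{(d+1)}, m_{(d+2)}, ..., m_{(d+n)}), the ideal of F[x_1,...,x_n]^{S_n} generated by the power sums of degrees d+1 through d+n. -/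
open MvPolynomial

/-!
A symmetric polynomial lies in `(x_1^{d+1}, …, x_n^{d+1})` iff each of its monomials has an
exponent `> d`, and it is a linear combination of the monomial symmetric polynomials `m_λ` of the
exponent types in its support; so it suffices to put every `m_λ` with top part `s > d` in the ideal
`J = (p_{d+1}, …, p_{d+n})`. Newton's identities give `p_m ∈ J` for all `m > d`. If `c` is the
multiplicity of `s` in `λ` and `μ` is `λ` with one `s` replaced by `0`, then `p_s m_μ` is `c m_λ`
plus monomial symmetric polynomials of the same degree with a larger top part. As `1 ≤ c ≤ n`, the
characteristic hypothesis makes `c` invertible, and induction on `|λ| - s` gives `m_λ ∈ J`.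
-/

open Finset

theorem natCast_ne_zero_of_lt_ringChar {R : Type*} [NonAssocSemiring R] {N c : ℕ}
    (hR : ringChar R = 0 ∨ N < ringChar R) (hc : 0 < c) (hcN : c ≤ N) : (c : R) ≠ 0 := by
  rw [Ne, ringChar.spec]
  intro hdvd
  rcases hR with hR | hR
  · rw [hR, zero_dvd_iff] at hdvd
    omega
  · have := Nat.le_of_dvd hc hdvd
    omega

theorem Nat.Partition.ofSym_parts_eq_singleton_iff {σ : Type*} [DecidableEq σ] {N : ℕ}
    (hN : N ≠ 0) {a : Sym σ N} :
    (Nat.Partition.ofSym a).parts = {N} ↔ ∃ i, a = Sym.replicate N i := by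
  constructor
  · intro h
    obtain ⟨i, hi, -⟩ := Multiset.map_eq_singleton.mp h
    refine ⟨i, Sym.eq_replicate_iff.mpr fun b hb => ?_⟩
    rw [← Multiset.mem_singleton, ← hi]
    exact Multiset.mem_dedup.mpr hb
  · rintro ⟨i, rfl⟩
    have hdedup : (Multiset.replicate N i).dedup = {i} := by
      rw [← Multiset.coe_replicate, Multiset.coe_dedup, List.replicate_dedup hN]
      rfl
    simp [Nat.Partition.ofSym, Sym.coe_replicate, hdedup]

namespace MvPolynomial

variable {σ R : Type*} [Fintype σ]

def exponents (g : σ →₀ ℕ) : Multiset ℕ := univ.val.map g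

theorem sum_exponents (g : σ →₀ ℕ) : (exponents g).sum = ∑ i, g i := rfl

theorem count_exponents (g : σ →₀ ℕ) (v : ℕ) : (exponents g).count v = #{j | g j = v} := by
  simp [exponents, Multiset.count_map, Finset.card, Finset.filter_val, eq_comm]

theorem exponents_equivMapDomain (e : σ ≃ σ) (g : σ →₀ ℕ) :
    exponents (g.equivMapDomain e) = exponents g := by
  have : ⇑(g.equivMapDomain e) = g ∘ e.symm := _root_.funext (Finsupp.equivMapDomain_apply e g)
  rw [exponents, this, ← Multiset.map_map, Multiset.map_univ_val_equiv, exponents]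

theorem exists_equivMapDomain_eq_of_exponents_eq {g g' : σ →₀ ℕ}
    (h : exponents g = exponents g') : ∃ e : Equiv.Perm σ, g.equivMapDomain e = g' := by
  classical
  have hfiber (v : ℕ) : Fintype.card {i // g i = v} = Fintype.card {i // g' i = v} := by
    simpa [Fintype.card_subtype, count_exponents] using congrArg (Multiset.count v) h
  let e : Equiv.Perm σ := Equiv.ofFiberEquiv fun v => Fintype.equivOfCardEq (hfiber v)
  refine ⟨e, Finsupp.ext fun j => ?_⟩
  rw [Finsupp.equivMapDomain_apply, ← Equiv.ofFiberEquiv_map (f := g) _ (e.symm j),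
    Equiv.apply_symm_apply]

section CommSemiring

variable [CommSemiring R]

theorem IsSymmetric.coeff_eq_of_exponents_eq {P : MvPolynomial σ R} (hP : P.IsSymmetric)
    {g g' : σ →₀ ℕ} (h : exponents g = exponents g') : coeff g P = coeff g' P := by
  obtain ⟨e, rfl⟩ := exists_equivMapDomain_eq_of_exponents_eq h
  rw [Finsupp.equivMapDomain_eq_mapDomain, ← coeff_rename_mapDomain _ e.injective, hP e]

theorem isSymmetric_of_coeff_eq {P : MvPolynomial σ R}
    (h : ∀ g g', exponents g = exponents g' → coeff g P = coeff g' P) : P.IsSymmetric := by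
  intro e
  ext g
  obtain ⟨g₀, rfl⟩ : ∃ g₀, g₀.equivMapDomain e = g :=
    ⟨g.equivMapDomain e.symm, by rw [← Finsupp.equivMapDomain_trans, e.symm_trans_self,
      Finsupp.equivMapDomain_refl]⟩
  rw [Finsupp.equivMapDomain_eq_mapDomain, coeff_rename_mapDomain _ e.injective, h]
  rw [← Finsupp.equivMapDomain_eq_mapDomain, exponents_equivMapDomain]

theorem msymm_eq_psum [DecidableEq σ] {N m : ℕ} {P : N.Partition}
    (hP : P.parts = {m}) : msymm σ R P = psum σ R m := by
  obtain rfl : N = m := by rw [← P.parts_sum, hP, Multiset.sum_singleton]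
  have hN : N ≠ 0 := (P.parts_pos (hP ▸ Multiset.mem_singleton_self N)).ne'
  have hmem (i : σ) : Nat.Partition.ofSym (Sym.replicate N i) = P :=
    Nat.Partition.ext ((Nat.Partition.ofSym_parts_eq_singleton_iff hN).mpr ⟨i, rfl⟩ ▸ hP.symm)
  have hbij : Function.Bijective fun i => (⟨Sym.replicate N i, hmem i⟩ :
      {a : Sym σ N // Nat.Partition.ofSym a = P}) := by
    refine ⟨fun i j hij => Sym.replicate_right_injective hN (congrArg Subtype.val hij),
      fun ⟨a, ha⟩ => ?_⟩
    obtain ⟨i, rfl⟩ := (Nat.Partition.ofSym_parts_eq_singleton_iff hN).mp (ha ▸ hP)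
    exact ⟨i, rfl⟩
  rw [msymm, psum]
  refine (Fintype.sum_bijective _ hbij _ _ fun i => ?_).symm
  simp [Sym.coe_replicate, Multiset.map_replicate, Multiset.prod_replicate]

variable (σ R) in
noncomputable def psumS (m : ℕ) : symmetricSubalgebra σ R :=
  ⟨psum σ R m, psum_isSymmetric σ R m⟩

variable (σ R) in
noncomputable def powerSumIdeal (d : ℕ) : Ideal (symmetricSubalgebra σ R) :=
  Ideal.span ((fun j => psumS σ R (d + j)) '' Set.Icc 1 (Fintype.card σ))

theorem esymm_eq_zero_of_card_lt {k : ℕ} (hk : Fintype.card σ < k) : esymm σ R k = 0 := by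
  rw [esymm, powersetCard_eq_empty.mpr (by rwa [card_univ]), sum_empty]

variable [DecidableEq σ]

variable (σ R) in
/-- Unlike `msymm`, this is indexed by the multiset of all exponents (zeros included), and is
defined by its coefficients. -/
noncomputable def monomialSymm (t : Multiset ℕ) : MvPolynomial σ R :=
  ∑ g ∈ (univ.finsuppAntidiag t.sum).filter (exponents · = t), monomial g 1

theorem coeff_monomialSymm (t : Multiset ℕ) (g : σ →₀ ℕ) :
    coeff g (monomialSymm σ R t) = if exponents g = t then 1 else 0 := by
  rw [monomialSymm, coeff_sum]
  simp only [coeff_monomial, sum_ite_eq', mem_filter, mem_finsuppAntidiag, ← sum_exponents]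
  by_cases h : exponents g = t <;> simp [h]

theorem monomialSymm_isSymmetric (t : Multiset ℕ) : (monomialSymm σ R t).IsSymmetric :=
  isSymmetric_of_coeff_eq fun g g' h => by simp only [coeff_monomialSymm, h]

theorem IsSymmetric.mem_span_monomialSymm {P : MvPolynomial σ R} (hP : P.IsSymmetric) :
    P ∈ Submodule.span R
      ((fun g => monomialSymm σ R (exponents g)) '' (P.support : Set (σ →₀ ℕ))) := by
  suffices ∑ t ∈ P.support.image exponents, ∑ g ∈ P.support with exponents g = t,
      monomial g (coeff g P) ∈ Submodule.span R _ by
    rwa [sum_fiberwise_of_maps_to fun g hg => mem_image_of_mem exponents hg,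
      support_sum_monomial_coeff] at this
  refine Submodule.sum_mem _ fun t ht => ?_
  obtain ⟨g₀, hg₀, rfl⟩ := mem_image.mp ht
  have hfiber : ∑ g ∈ P.support with exponents g = exponents g₀, monomial g (coeff g P) =
      coeff g₀ P • monomialSymm σ R (exponents g₀) := by
    rw [monomialSymm, smul_sum]
    refine sum_congr (Finset.ext fun g => ?_) fun g hg => ?_
    · simp only [mem_filter, mem_support_iff, mem_finsuppAntidiag, ← sum_exponents]
      refine and_congr_left fun hg => ?_
      simp [hP.coeff_eq_of_exponents_eq hg, mem_support_iff.mp hg₀, hg]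
    · rw [smul_monomial, smul_eq_mul, mul_one,
        hP.coeff_eq_of_exponents_eq (mem_filter.mp hg).2]
  rw [hfiber]
  exact Submodule.smul_mem _ _ (Submodule.subset_span ⟨g₀, hg₀, rfl⟩)

variable (σ R) in
noncomputable def monomialSymmS (t : Multiset ℕ) : symmetricSubalgebra σ R :=
  ⟨monomialSymm σ R t, monomialSymm_isSymmetric t⟩

theorem mem_of_forall_monomialSymmS_mem {N : Submodule R (symmetricSubalgebra σ R)}
    (x : symmetricSubalgebra σ R)
    (h : ∀ g ∈ (x : MvPolynomial σ R).support, monomialSymmS σ R (exponents g) ∈ N) :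
    x ∈ N := by
  set gens := (fun g => monomialSymmS σ R (exponents g)) ''
    ((x : MvPolynomial σ R).support : Set (σ →₀ ℕ))
  have hspan : Submodule.span R (Subtype.val '' gens) ≤
      (Submodule.span R gens).map (symmetricSubalgebra σ R).val.toLinearMap :=
    Submodule.span_le.mpr <| by
      rintro _ ⟨y, hy, rfl⟩
      exact ⟨y, Submodule.subset_span hy, rfl⟩
  obtain ⟨y, hy, hyx⟩ := hspan (by
    rw [Set.image_image]; exact IsSymmetric.mem_span_monomialSymm x.2)
  rw [Subtype.ext hyx] at hy
  exact Submodule.span_le.mpr (by rintro _ ⟨g, hg, rfl⟩; exact h g hg) hy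

theorem coeff_psum_mul_monomialSymm (s : ℕ) (t : Multiset ℕ) (h : σ →₀ ℕ) :
    coeff h (psum σ R s * monomialSymm σ R t) =
      #{j | s ≤ h j ∧ exponents (h - Finsupp.single j s) = t} := by
  simp only [psum, sum_mul, coeff_sum, X_pow_eq_monomial, coeff_monomial_mul',
    Finsupp.single_le_iff, coeff_monomialSymm, one_mul, natCast_card_filter, ite_and]

end CommSemiring

section DecidableEq

variable [DecidableEq σ]

theorem exponents_eq_cons (g : σ →₀ ℕ) (i : σ) :
    exponents g = g i ::ₘ (univ.erase i).val.map g := by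
  rw [exponents, ← Multiset.map_cons, Finset.erase_val, Multiset.cons_erase (mem_univ i)]

theorem exponents_tsub_single (g : σ →₀ ℕ) (i : σ) (s : ℕ) :
    exponents (g - Finsupp.single i s) = (g i - s) ::ₘ (univ.erase i).val.map g := by
  rw [exponents_eq_cons _ i, Finsupp.tsub_apply, Finsupp.single_eq_same]
  refine congrArg _ (Multiset.map_congr rfl fun j hj => ?_)
  rw [Finsupp.tsub_apply, Finsupp.single_eq_of_ne (ne_of_mem_erase hj), tsub_zero]

theorem card_filter_exponents_tsub_single {g h : σ →₀ ℕ} {i : σ} (hmax : ∀ j, g j ≤ g i)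
    (hhg : exponents h = exponents g) :
    #{j | g i ≤ h j ∧ exponents (h - Finsupp.single j (g i)) =
      exponents (g - Finsupp.single i (g i))} = (exponents g).count (g i) := by
  rw [← hhg, count_exponents]
  refine congrArg _ (filter_congr fun j _ => ?_)
  have hj : h j ≤ g i := by
    have : h j ∈ exponents g := hhg ▸ Multiset.mem_map_of_mem h (mem_univ_val j)
    obtain ⟨k, -, hk⟩ := Multiset.mem_map.mp this
    exact hk ▸ hmax k
  rw [exponents_tsub_single, exponents_tsub_single, tsub_self]
  constructor
  · exact fun hji => le_antisymm hj hji.1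
  · intro hji
    rw [exponents_eq_cons h j, exponents_eq_cons g i, ← hji, Multiset.cons_inj_right] at hhg
    rw [← hji, tsub_self, hhg]
    exact ⟨le_rfl, rfl⟩

theorem lt_of_exponents_tsub_single_eq {g h : σ →₀ ℕ} {i j : σ} (hij : g i ≤ h j)
    (he : exponents (h - Finsupp.single j (g i)) = exponents (g - Finsupp.single i (g i)))
    (hne : exponents h ≠ exponents g) : g i < h j ∧ ∑ k, h k = ∑ k, g k := by
  rw [exponents_tsub_single, exponents_tsub_single, tsub_self] at he
  have hlt : g i < h j := by
    refine lt_of_le_of_ne hij fun heq => hne ?_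
    rw [← heq, tsub_self, Multiset.cons_inj_right] at he
    rw [exponents_eq_cons h j, exponents_eq_cons g i, ← heq, he]
  refine ⟨hlt, ?_⟩
  have hsum := congrArg Multiset.sum he
  rw [← sum_exponents, ← sum_exponents, exponents_eq_cons h j, exponents_eq_cons g i]
  simp only [Multiset.sum_cons] at hsum ⊢
  omega

end DecidableEq

section CommRing

variable [CommRing R]

theorem psumS_mem_powerSumIdeal {d m : ℕ} (hm : d < m) : psumS σ R m ∈ powerSumIdeal σ R d := by
  induction m using Nat.strong_induction_on with | _ m ih =>
  by_cases hmn : m ≤ d + Fintype.card σ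
  · exact Ideal.subset_span ⟨m - d, by simp only [Set.mem_Icc]; omega,
      by simp only [Nat.add_sub_cancel' hm.le]⟩
  -- Newton's identity in degree `m > card σ`, where `esymm σ R m` vanishes
  have hnewton : psumS σ R m = -∑ a ∈ antidiagonal m with a.1 ∈ Set.Ioo 0 m,
      (-1) ^ a.1 * ⟨esymm σ R a.1, esymm_isSymmetric σ R a.1⟩ * psumS σ R a.2 := by
    apply Subtype.ext
    simp [psumS, psum_eq_mul_esymm_sub_sum σ R m (by omega),
      esymm_eq_zero_of_card_lt (by omega : Fintype.card σ < m)]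
  rw [hnewton]
  refine neg_mem (Ideal.sum_mem _ fun a ha => ?_)
  obtain ⟨hsum, h0, hlt⟩ : a.1 + a.2 = m ∧ 0 < a.1 ∧ a.1 < m := by simpa using ha
  by_cases hcard : Fintype.card σ < a.1
  · have : (⟨esymm σ R a.1, esymm_isSymmetric σ R a.1⟩ : symmetricSubalgebra σ R) = 0 :=
      Subtype.ext (esymm_eq_zero_of_card_lt hcard)
    simp [this]
  · exact Ideal.mul_mem_left _ _ (ih a.2 (by omega) (by omega))

theorem exists_lt_of_mem_support_psum_mul_monomialSymm_sub [DecidableEq σ] {g h : σ →₀ ℕ}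
    {i : σ} (hmax : ∀ j, g j ≤ g i)
    (hh : h ∈ (psum σ R (g i) * monomialSymm σ R (exponents (g - Finsupp.single i (g i))) -
      (exponents g).count (g i) • monomialSymm σ R (exponents g)).support) :
    (∃ j, g i < h j) ∧ ∑ k, h k = ∑ k, g k := by
  rw [mem_support_iff, coeff_sub, coeff_smul, coeff_psum_mul_monomialSymm,
    coeff_monomialSymm] at hh
  by_cases hhg : exponents h = exponents g
  · rw [if_pos hhg, card_filter_exponents_tsub_single hmax hhg, nsmul_one, sub_self] at hh
    exact absurd rfl hh
  rw [if_neg hhg, smul_zero, sub_zero] at hh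
  obtain ⟨j, hj⟩ : ({j | g i ≤ h j ∧ exponents (h - Finsupp.single j (g i)) =
      exponents (g - Finsupp.single i (g i))} : Finset σ).Nonempty := by
    rw [nonempty_iff_ne_empty]
    rintro h0
    simp [h0] at hh
  obtain ⟨hij, he⟩ := (mem_filter.mp hj).2
  obtain ⟨hlt, hsum⟩ := lt_of_exponents_tsub_single_eq hij he hhg
  exact ⟨⟨j, hlt⟩, hsum⟩

end CommRing

theorem monomialSymmS_mem_powerSumIdeal [DecidableEq σ] {F : Type*} [Field F]
    (hF : ringChar F = 0 ∨ Fintype.card σ < ringChar F) {d : ℕ} (g : σ →₀ ℕ)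
    (hg : ∃ i, d < g i) : monomialSymmS σ F (exponents g) ∈ powerSumIdeal σ F d := by
  induction hk : ∑ j, g j - univ.sup g using Nat.strong_induction_on generalizing g with
  | _ k ih =>
  obtain ⟨i₀, hi₀⟩ := hg
  obtain ⟨i, -, hi⟩ := exists_mem_eq_sup univ ⟨i₀, mem_univ i₀⟩ g
  have hmax (j : σ) : g j ≤ g i := hi ▸ le_sup (mem_univ j)
  have hdi : d < g i := hi₀.trans_le (hmax i₀)
  set c := (exponents g).count (g i)
  have hc : (c : F) ≠ 0 := natCast_ne_zero_of_lt_ringChar hF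
    (Multiset.count_pos.mpr (Multiset.mem_map_of_mem g (mem_univ_val i)))
    ((Multiset.count_le_card _ _).trans (by simp [exponents]))
  have hrest : psumS σ F (g i) * monomialSymmS σ F (exponents (g - Finsupp.single i (g i))) -
      c • monomialSymmS σ F (exponents g) ∈ powerSumIdeal σ F d := by
    refine mem_of_forall_monomialSymmS_mem (N := (powerSumIdeal σ F d).restrictScalars F) _
      fun h hh => ?_
    obtain ⟨⟨j, hj⟩, hsum⟩ := exists_lt_of_mem_support_psum_mul_monomialSymm_sub hmax hh
    refine ih _ ?_ h ⟨j, hdi.trans hj⟩ rfl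
    have hjh : h j ≤ univ.sup h := le_sup (mem_univ j)
    have hsup : univ.sup h ≤ ∑ k, h k :=
      Finset.sup_le fun k _ => single_le_sum (by simp) (mem_univ k)
    omega
  have hmul := Ideal.mul_mem_right (monomialSymmS σ F (exponents (g - Finsupp.single i (g i))))
    _ (psumS_mem_powerSumIdeal (R := F) hdi)
  have hcg : (c : F) • monomialSymmS σ F (exponents g) ∈ powerSumIdeal σ F d := by
    simpa [Nat.cast_smul_eq_nsmul] using sub_mem hmul hrest
  simpa [smul_smul, inv_mul_cancel₀ hc] using
    Submodule.smul_of_tower_mem (powerSumIdeal σ F d) (c : F)⁻¹ hcg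

end MvPolynomial

theorem mSymS_singleton {F : Type*} [Field F] {n m : ℕ} (hm : 0 < m) :
    mSymS F n {m} = psumS (Fin n) F m :=
  Subtype.ext (msymm_eq_psum (by simp [Multiset.filter_singleton, hm]))

theorem exists_lt_of_mem_truncIdeal {F : Type*} [Field F] {n d : ℕ}
    {x : symmetricSubalgebra (Fin n) F} (hx : x ∈ truncIdeal F n d) {g : Fin n →₀ ℕ}
    (hg : g ∈ (x : MvPolynomial (Fin n) F).support) : ∃ i, d < g i := by
  have hgens : (Set.range fun i : Fin n => (X i : MvPolynomial (Fin n) F) ^ (d + 1)) =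
      (fun s => monomial s 1) '' Set.range fun i => Finsupp.single i (d + 1) := by
    rw [← Set.range_comp]
    exact congrArg Set.range (funext fun i => X_pow_eq_monomial)
  rw [truncIdeal, Ideal.mem_comap, hgens, mem_ideal_span_monomial_image] at hx
  obtain ⟨_, ⟨i, rfl⟩, hi⟩ := hx g hg
  exact ⟨i, Finsupp.single_le_iff.mp hi⟩

theorem psumS_mem_truncIdeal {F : Type*} [Field F] {n d j : ℕ} (hj : 1 ≤ j) :
    psumS (Fin n) F (d + j) ∈ truncIdeal F n d := by
  rw [truncIdeal, Ideal.mem_comap]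
  change ∑ i, X i ^ (d + j) ∈ _
  refine Ideal.sum_mem _ fun i _ => ?_
  rw [show d + j = (j - 1) + (d + 1) by omega, pow_add]
  exact Ideal.mul_mem_left _ _ (Ideal.subset_span ⟨i, rfl⟩)

theorem truncIdeal_eq_span_powerSums_general (F : Type*) [Field F] (n : ℕ) (d : ℕ)
    (hp : ringChar F = 0 ∨ n < ringChar F) :
    truncIdeal F n d =
      Ideal.span ((fun j => mSymS F n {d + j}) '' Set.Icc 1 n) := by
  have hgens : Ideal.span ((fun j => mSymS F n {d + j}) '' Set.Icc 1 n) =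
      powerSumIdeal (Fin n) F d := by
    rw [powerSumIdeal, Fintype.card_fin]
    exact congrArg Ideal.span (Set.image_congr fun j hj => mSymS_singleton (by grind))
  rw [hgens]
  refine le_antisymm (fun x hx => ?_) (Ideal.span_le.mpr ?_)
  · refine mem_of_forall_monomialSymmS_mem (N := (powerSumIdeal (Fin n) F d).restrictScalars F)
      x fun g hg => monomialSymmS_mem_powerSumIdeal ?_ g (exists_lt_of_mem_truncIdeal hx hg)
    rwa [Fintype.card_fin]
  · rintro _ ⟨j, hj, rfl⟩
    exact psumS_mem_truncIdeal hj.1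

/-- if `char F = 0` or `n < char F`, then
`I_{n,d} = (m_{(d+1)}, …, m_{(d+n)})`, the ideal generated by the power sums of
degrees `d+1, …, d+n`. -/
theorem truncIdeal_eq_span_powerSums (F : Type*) [Field F] (n : ℕ) (hn : 0 < n) (d : ℕ)
    (hp : ringChar F = 0 ∨ n < ringChar F) :
    truncIdeal F n d =
      Ideal.span ((fun j => mSymS F n {d + j}) '' Set.Icc 1 n) :=
  truncIdeal_eq_span_powerSums_general F n d hp
end

section
/- Let F be a field of characteristic p > 0 and n a positive integer. Let i be a nonnegative integer with p^i ≤ n, and write n = q·p^i + r with q a positive integer and 0 ≤ r < p^i. Then for every positive integer s there exist coefficients a_μ ∈ F such that Σ_{j=1}^{q} (-1)^{j-1} m_{(1^{j·p^i})} · m_{((s+q+1-j)^{p^i})} = m_{((s+q+1)^{p^i})} + Σ_μ a_μ m_μ, where the sum on the right runs over partitions μ of length at most n with lp(μ) ≥ s+1 and lm(μ) < p^i. -/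
open MvPolynomial

/-!
Write `x_S = ∏_{i ∈ S} X i`. For `a ≥ 2` we have `m_{(a^k)} = ∑_{#S = k} x_S ^ a` and
`m_{(1^m)} = ∑_{#T = m} x_T`, and the product `x_S ^ a * x_T` determines `(S, T)`: its exponents
are `a + 1` on `S ∩ T`, `a` on `S \ T` and `1` on `T \ S`. Grouping the pairs by `t = #(S ∩ T)`
gives `m_{(1^m)} m_{(a^k)} = ∑_{t=0}^{k} m_{((a+1)^t, a^(k-t), 1^(m-t))}`.

Take `k = p^i`, `m = jk` and `a = s+q+1-j`. The term `t = 0` of the `j`-th product equals the term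
`t = k` of the `(j+1)`-st, so the alternating sum over `j` telescopes to `m_{((s+q+1)^k)}`, up to
`± m_{((s+1)^k, 1^(qk))}`, which vanishes because it has `(q+1)k > n` parts. The remaining terms,
`0 < t < k`, have leading part `s+q+2-j ≥ s+1` and leading multiplicity `t < k`.
-/

open Finset

/-- The shape of `x_S ^ a * x_T` when `#S = k`, `#T = m` and `#(S ∩ T) = t`. -/
def newtonPart (a k m t : ℕ) : Multiset ℕ :=
  Multiset.replicate t (a + 1) + Multiset.replicate (k - t) a + Multiset.replicate (m - t) 1

section newtonPart

variable {a k m t : ℕ}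

lemma count_newtonPart (v : ℕ) : (newtonPart a k m t).count v =
    (if a + 1 = v then t else 0) + (if a = v then k - t else 0) + (if 1 = v then m - t else 0) := by
  simp only [newtonPart, Multiset.count_add, Multiset.count_replicate]

lemma pos_of_mem_newtonPart (ha : 0 < a) {x : ℕ} (hx : x ∈ newtonPart a k m t) : 0 < x := by
  simp only [newtonPart, Multiset.mem_add, Multiset.mem_replicate] at hx
  omega

lemma eq_of_newtonPart_eq {k' m' t' : ℕ} (ha : 2 ≤ a) (htk : t ≤ k) (htm : t ≤ m)
    (htk' : t' ≤ k') (htm' : t' ≤ m') (h : newtonPart a k m t = newtonPart a k' m' t') :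
    k = k' ∧ m = m' ∧ t = t' := by
  have h₁ := congrArg (Multiset.count (a + 1)) h
  have h₂ := congrArg (Multiset.count a) h
  have h₃ := congrArg (Multiset.count 1) h
  simp only [count_newtonPart] at h₁ h₂ h₃
  split_ifs at h₁ h₂ h₃ <;> omega

lemma leadingPart_newtonPart (ht : 0 < t) : leadingPart (newtonPart a k m t) = a + 1 := by
  refine le_antisymm (Multiset.sup_le.mpr fun x hx => ?_) (Multiset.le_sup ?_)
  · simp only [newtonPart, Multiset.mem_add, Multiset.mem_replicate] at hx
    omega
  · simp [newtonPart, Multiset.mem_replicate, ht.ne']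

lemma leadingMult_newtonPart (ha : 0 < a) (ht : 0 < t) : leadingMult (newtonPart a k m t) = t := by
  rw [leadingMult, ← leadingPart, leadingPart_newtonPart ht, count_newtonPart]
  simp only [if_true]
  split_ifs <;> omega

end newtonPart

section Multiplicities

variable {σ : Type*} [DecidableEq σ]

/-- For `s : Sym σ N` these are the parts of `Nat.Partition.ofSym s`. -/
def multiplicities (s : Multiset σ) : Multiset ℕ := s.dedup.map s.count

lemma card_multiplicities (s : Multiset σ) :
    Multiset.card (multiplicities s) = #s.toFinset := by
  simp [multiplicities, Multiset.toFinset]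

lemma sum_multiplicities (s : Multiset σ) : (multiplicities s).sum = Multiset.card s :=
  Multiset.toFinset_sum_count_eq s

lemma count_mem_multiplicities {s : Multiset σ} {i : σ} (hi : i ∈ s) :
    s.count i ∈ multiplicities s :=
  Multiset.mem_map_of_mem _ (Multiset.mem_dedup.mpr hi)

lemma count_nsmul_val (b : ℕ) (S : Finset σ) (i : σ) :
    (b • S.val).count i = if i ∈ S then b else 0 := by
  rw [Multiset.count_nsmul, Multiset.count_eq_of_nodup S.nodup]
  simp

lemma count_nsmul_val_add_val (a : ℕ) (S T : Finset σ) (i : σ) :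
    (a • S.val + T.val).count i = (if i ∈ S then a else 0) + (if i ∈ T then 1 else 0) := by
  simp only [Multiset.count_add, count_nsmul_val, Multiset.count_eq_of_nodup T.nodup,
    Finset.mem_val]

lemma eq_of_nsmul_val_add_val_eq {a : ℕ} (ha : 2 ≤ a) {S T S' T' : Finset σ}
    (h : a • S.val + T.val = a • S'.val + T'.val) : S = S' ∧ T = T' := by
  have hi := fun i => congrArg (Multiset.count i) h
  simp only [count_nsmul_val_add_val] at hi
  constructor <;> ext i <;> grind

variable [Fintype σ]

lemma count_multiplicities (s : Multiset σ) {v : ℕ} (hv : 0 < v) :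
    (multiplicities s).count v = #{i | s.count i = v} := by
  rw [multiplicities, Multiset.count_map]
  have : s.dedup.filter (fun i => v = s.count i) = (univ.filter fun i => s.count i = v).val := by
    refine Multiset.Nodup.ext (s.nodup_dedup.filter _) (Finset.nodup _) |>.mpr fun i => ?_
    simp only [Multiset.mem_filter, Multiset.mem_dedup, Finset.mem_val, Finset.mem_filter,
      Finset.mem_univ, true_and]
    exact ⟨fun h => h.2.symm, fun h => ⟨Multiset.count_pos.mp (h ▸ hv), h.symm⟩⟩
  rw [this]
  rfl

lemma multiplicities_eq_of_card_filter {s : Multiset σ} {lam : Multiset ℕ}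
    (hlam : ∀ x ∈ lam, 0 < x) (h : ∀ v, 0 < v → #{i | s.count i = v} = lam.count v) :
    multiplicities s = lam := by
  ext v
  rcases Nat.eq_zero_or_pos v with rfl | hv
  · have hs : 0 ∉ multiplicities s := by simp [multiplicities]
    rw [Multiset.count_eq_zero_of_notMem hs,
      Multiset.count_eq_zero_of_notMem fun h0 => (hlam 0 h0).false]
  · rw [count_multiplicities s hv, h v hv]

lemma multiplicities_nsmul_val {b : ℕ} (hb : 0 < b) (S : Finset σ) :
    multiplicities (b • S.val) = Multiset.replicate #S b := by
  refine multiplicities_eq_of_card_filter (fun x hx => (Multiset.eq_of_mem_replicate hx) ▸ hb)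
    fun v hv => ?_
  simp only [count_nsmul_val, Multiset.count_replicate]
  split_ifs with hbv
  · congr 1
    ext i
    by_cases hi : i ∈ S <;> simp [hi, hbv, hv.ne]
  · rw [Finset.card_eq_zero, Finset.filter_eq_empty_iff]
    intro i _
    split_ifs <;> omega

lemma multiplicities_nsmul_val_add_val {a : ℕ} (ha : 2 ≤ a) (S T : Finset σ) :
    multiplicities (a • S.val + T.val) = newtonPart a #S #T #(S ∩ T) := by
  refine multiplicities_eq_of_card_filter (fun x => pos_of_mem_newtonPart (by omega))
    fun v hv => ?_
  have hS := Finset.card_sdiff_add_card_inter S T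
  have hT := Finset.card_sdiff_add_card_inter T S
  rw [Finset.inter_comm] at hT
  have hlevel : ∀ U : Finset σ, (∀ i, i ∈ U ↔ ((if i ∈ S then a else 0) +
      (if i ∈ T then 1 else 0) = v)) → #{i | (a • S.val + T.val).count i = v} = #U := by
    intro U hU
    congr 1
    ext i
    simp only [Finset.mem_filter, Finset.mem_univ, true_and, count_nsmul_val_add_val, hU]
  rw [count_newtonPart]
  rcases (show v = a + 1 ∨ v = a ∨ v = 1 ∨ (v ≠ a + 1 ∧ v ≠ a ∧ v ≠ 1) by omega)
    with rfl | rfl | rfl | ⟨h₁, h₂, h₃⟩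
  · rw [hlevel (S ∩ T) fun i => by grind]
    split_ifs <;> omega
  · rw [hlevel (S \ T) fun i => by grind]
    split_ifs <;> omega
  · rw [hlevel (T \ S) fun i => by grind]
    split_ifs <;> omega
  · rw [hlevel ∅ fun i => by grind, Finset.card_empty]
    split_ifs <;> omega

end Multiplicities

theorem MvPolynomial.msymm_eq_sum_of_mem_iff {σ R : Type*} [CommSemiring R] [Fintype σ]
    [DecidableEq σ] {N : ℕ} (μ : N.Partition) (𝒮 : Finset (Multiset σ))
    (h𝒮 : ∀ s, s ∈ 𝒮 ↔ multiplicities s = μ.parts) :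
    msymm σ R μ = ∑ s ∈ 𝒮, (s.map X).prod := by
  refine Finset.sum_bij (fun s _ => s.1.1)
    (fun s _ => (h𝒮 _).mpr (congrArg Nat.Partition.parts s.2))
    (fun s _ s' _ h => Subtype.ext (Sym.coe_injective h)) (fun s hs => ?_) (fun _ _ => rfl)
  have hshape := (h𝒮 s).mp hs
  have hcard : Multiset.card s = N := by
    rw [← sum_multiplicities, hshape, μ.parts_sum]
  exact ⟨⟨⟨s, hcard⟩, Nat.Partition.ext hshape⟩, Finset.mem_univ _, rfl⟩

section mSym

variable {F : Type*} [Field F] {n : ℕ}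

theorem mSym_eq_sum_of_mem_iff {lam : Multiset ℕ} (𝒮 : Finset (Multiset (Fin n)))
    (h𝒮 : ∀ s, s ∈ 𝒮 ↔ multiplicities s = lam.filter (0 < ·)) :
    mSym F n lam = ∑ s ∈ 𝒮, (s.map X).prod :=
  msymm_eq_sum_of_mem_iff _ 𝒮 h𝒮

theorem mSym_eq_zero_of_lt_card {lam : Multiset ℕ}
    (h : n < Multiset.card (lam.filter (0 < ·))) : mSym F n lam = 0 := by
  refine (mSym_eq_sum_of_mem_iff ∅ fun s => ?_).trans Finset.sum_empty
  refine iff_of_false (Finset.notMem_empty s) fun hs => h.not_ge ?_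
  rw [← hs, card_multiplicities]
  exact (Finset.card_le_univ _).trans_eq (Fintype.card_fin n)

theorem sum_filter_smul_mSym (c : Multiset ℕ →₀ F) :
    (Finsupp.filter (fun μ : Multiset ℕ => Multiset.card (μ.filter (0 < ·)) ≤ n) c).sum
      (fun μ b => b • mSym F n μ) = c.sum fun μ b => b • mSym F n μ := by
  rw [← Finsupp.sum_filter_add_sum_filter_not
    (fun μ : Multiset ℕ => Multiset.card (μ.filter (0 < ·)) ≤ n) c, left_eq_add]
  refine sum_eq_zero fun μ hμ => ?_
  rw [Finsupp.support_filter, Finset.mem_filter, not_le] at hμ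
  exact (congrArg _ (mSym_eq_zero_of_lt_card hμ.2)).trans (smul_zero _)

theorem mSym_replicate {b : ℕ} (hb : 0 < b) (c : ℕ) :
    mSym F n (Multiset.replicate c b) =
      ∑ S ∈ powersetCard c (univ : Finset (Fin n)), ((b • S.val).map X).prod := by
  rw [mSym_eq_sum_of_mem_iff ((powersetCard c univ).image fun S => b • S.val),
    sum_image fun S _ T _ h => by
      simpa [Multiset.toFinset_nsmul _ _ hb.ne'] using congrArg Multiset.toFinset h]
  intro s
  rw [Multiset.filter_eq_self.mpr fun x hx => (Multiset.eq_of_mem_replicate hx) ▸ hb,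
    Finset.mem_image]
  constructor
  · rintro ⟨S, hS, rfl⟩
    rw [multiplicities_nsmul_val hb, Finset.mem_powersetCard_univ.mp hS]
  · intro hs
    refine ⟨s.toFinset, Finset.mem_powersetCard_univ.mpr ?_, ?_⟩
    · rw [← card_multiplicities, hs, Multiset.card_replicate]
    · ext i
      rw [count_nsmul_val]
      split_ifs with hi <;> rw [Multiset.mem_toFinset] at hi
      · exact (Multiset.eq_of_mem_replicate (hs ▸ count_mem_multiplicities hi)).symm
      · exact (Multiset.count_eq_zero_of_notMem hi).symm

variable {a k m t : ℕ}

theorem mSym_newtonPart (ha : 2 ≤ a) (htk : t ≤ k) (htm : t ≤ m) :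
    mSym F n (newtonPart a k m t) =
      ∑ P ∈ (powersetCard k univ ×ˢ powersetCard m (univ : Finset (Fin n))).filter
        (fun P => #(P.1 ∩ P.2) = t), ((a • P.1.val + P.2.val).map X).prod := by
  rw [mSym_eq_sum_of_mem_iff
      (Finset.image (fun P : Finset (Fin n) × Finset (Fin n) => a • P.1.val + P.2.val) _),
    sum_image fun P _ Q _ h => Prod.ext_iff.mpr (eq_of_nsmul_val_add_val_eq ha h)]
  intro s
  rw [Multiset.filter_eq_self.mpr fun x => pos_of_mem_newtonPart (by omega), Finset.mem_image]
  constructor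
  · rintro ⟨⟨S, T⟩, hP, rfl⟩
    simp only [Finset.mem_filter, Finset.mem_product, Finset.mem_powersetCard_univ] at hP
    rw [multiplicities_nsmul_val_add_val ha, hP.1.1, hP.1.2, hP.2]
  · intro hs
    have hvals : ∀ i, s.count i = 0 ∨ s.count i = 1 ∨ s.count i = a ∨
        s.count i = a + 1 := by
      intro i
      by_cases hi : i ∈ s
      · have := hs ▸ count_mem_multiplicities hi
        simp only [newtonPart, Multiset.mem_add, Multiset.mem_replicate] at this
        omega
      · exact Or.inl (Multiset.count_eq_zero_of_notMem hi)
    set S : Finset (Fin n) := {i | a ≤ s.count i}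
    set T : Finset (Fin n) := {i | s.count i = 1 ∨ s.count i = a + 1}
    have hsST : a • S.val + T.val = s := by
      ext i
      rw [count_nsmul_val_add_val]
      simp only [S, T, Finset.mem_filter, Finset.mem_univ, true_and]
      have := hvals i
      split_ifs <;> omega
    have hST := multiplicities_nsmul_val_add_val ha S T
    rw [hsST, hs] at hST
    obtain ⟨rfl, rfl, rfl⟩ := eq_of_newtonPart_eq ha htk htm
      (Finset.card_le_card Finset.inter_subset_left)
      (Finset.card_le_card Finset.inter_subset_right) hST
    exact ⟨(S, T), by simp, hsST⟩

theorem mSym_one_mul_mSym (ha : 2 ≤ a) (hkm : k ≤ m) :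
    mSym F n (Multiset.replicate m 1) * mSym F n (Multiset.replicate k a) =
      ∑ t ∈ range (k + 1), mSym F n (newtonPart a k m t) := by
  rw [mSym_replicate one_pos, mSym_replicate (by omega), mul_comm, sum_mul_sum, ← sum_product',
    ← sum_fiberwise_of_maps_to (g := fun P => #(P.1 ∩ P.2)) (t := range (k + 1))]
  · refine sum_congr rfl fun t ht => ?_
    rw [Finset.mem_range_succ_iff] at ht
    rw [mSym_newtonPart ha ht (ht.trans hkm)]
    refine sum_congr rfl fun P _ => ?_
    rw [one_nsmul, Multiset.map_add, Multiset.prod_add]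
  · intro P hP
    simp only [Finset.mem_product, Finset.mem_powersetCard_univ] at hP
    exact Finset.mem_range_succ_iff.mpr (hP.1 ▸ Finset.card_le_card Finset.inter_subset_left)

theorem mSym_one_mul_mSym_eq_add (hk : 0 < k) (ha : 2 ≤ a) (hkm : k ≤ m) :
    mSym F n (Multiset.replicate m 1) * mSym F n (Multiset.replicate k a) =
      mSym F n (Multiset.replicate k a + Multiset.replicate m 1) +
        mSym F n (Multiset.replicate k (a + 1) + Multiset.replicate (m - k) 1) +
        ∑ t ∈ Ico 1 k, mSym F n (newtonPart a k m t) := by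
  rw [mSym_one_mul_mSym ha hkm, sum_range_succ, sum_range_eq_add_Ico _ hk, add_right_comm]
  simp [newtonPart]

end mSym

theorem sum_Icc_neg_one_pow_smul_add_succ {R M : Type*} [Ring R] [AddCommGroup M] [Module R M]
    (P : ℕ → M) (q : ℕ) :
    ∑ j ∈ Icc 1 q, (-1 : R) ^ (j - 1) • (P (j + 1) + P j) =
      P 1 - (-1 : R) ^ q • P (q + 1) := by
  induction q with
  | zero => simp
  | succ q ih =>
    rw [sum_Icc_succ_top (by omega), ih, Nat.add_sub_cancel, pow_succ, mul_neg_one, neg_smul,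
      smul_add]
    abel

theorem sum_Icc_neg_one_pow_smul_mSym_mul_mSym {F : Type*} [Field F] {n q k s : ℕ} (hk : 0 < k)
    (hs : 0 < s) (hn : n < (q + 1) * k) :
    ∑ j ∈ Icc 1 q, (-1 : F) ^ (j - 1) • (mSym F n (Multiset.replicate (j * k) 1) *
        mSym F n (Multiset.replicate k (s + q + 1 - j))) =
      mSym F n (Multiset.replicate k (s + q + 1)) + ∑ j ∈ Icc 1 q, ∑ t ∈ Ico 1 k,
        (-1 : F) ^ (j - 1) • mSym F n (newtonPart (s + q + 1 - j) k (j * k) t) := by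
  set P : ℕ → MvPolynomial (Fin n) F := fun j =>
    mSym F n (Multiset.replicate k (s + q + 2 - j) + Multiset.replicate ((j - 1) * k) 1)
  have hterm : ∀ j ∈ Icc 1 q, (-1 : F) ^ (j - 1) • (mSym F n (Multiset.replicate (j * k) 1) *
      mSym F n (Multiset.replicate k (s + q + 1 - j))) =
        (-1 : F) ^ (j - 1) • (P (j + 1) + P j) +
          ∑ t ∈ Ico 1 k,
            (-1 : F) ^ (j - 1) • mSym F n (newtonPart (s + q + 1 - j) k (j * k) t) := by
    intro j hj
    rw [Finset.mem_Icc] at hj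
    rw [mSym_one_mul_mSym_eq_add hk (by omega) (Nat.le_mul_of_pos_left k hj.1), ← smul_sum,
      ← smul_add]
    have e₁ : s + q + 2 - (j + 1) = s + q + 1 - j := by omega
    have e₂ : s + q + 1 - j + 1 = s + q + 2 - j := by omega
    simp only [P, e₁, e₂, Nat.sub_one_mul, add_one_mul, Nat.add_sub_cancel]
  have hPq : P (q + 1) = 0 := by
    refine mSym_eq_zero_of_lt_card ?_
    rw [Multiset.filter_eq_self.mpr fun x hx => by
      simp only [Multiset.mem_add, Multiset.mem_replicate] at hx; omega]
    simp only [Multiset.card_add, Multiset.card_replicate, Nat.add_sub_cancel]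
    rw [add_one_mul] at hn
    omega
  rw [sum_congr rfl hterm, sum_add_distrib, sum_Icc_neg_one_pow_smul_add_succ, hPq, smul_zero,
    sub_zero]
  simp [P]

theorem newton_like_general (F : Type*) [Field F] (n : ℕ) (i : ℕ)
    (q r : ℕ) (hnqr : n = q * ringChar F ^ i + r) (hr : r < ringChar F ^ i)
    (s : ℕ) (hs : 0 < s) :
    ∃ aC : Multiset ℕ →₀ F,
      (∀ mu ∈ aC.support, IsPartition n mu ∧ s + 1 ≤ leadingPart mu ∧
        leadingMult mu < ringChar F ^ i) ∧
      ∑ j ∈ Finset.Icc 1 q, (-1 : F) ^ (j - 1) •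
        (mSym F n (Multiset.replicate (j * ringChar F ^ i) 1) *
          mSym F n (Multiset.replicate (ringChar F ^ i) (s + q + 1 - j))) =
      mSym F n (Multiset.replicate (ringChar F ^ i) (s + q + 1))
        + aC.sum (fun mu c => c • mSym F n mu) := by
  set k := ringChar F ^ i
  have hk : 0 < k := by omega
  rw [sum_Icc_neg_one_pow_smul_mSym_mul_mSym hk hs (by rw [add_one_mul]; omega)]
  let c : Multiset ℕ →₀ F := ∑ j ∈ Icc 1 q, ∑ t ∈ Ico 1 k,
    Finsupp.single (newtonPart (s + q + 1 - j) k (j * k) t) ((-1 : F) ^ (j - 1))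
  refine ⟨Finsupp.filter (fun μ : Multiset ℕ => Multiset.card (μ.filter (0 < ·)) ≤ n) c,
    fun μ hμ => ?_, ?_⟩
  · rw [Finsupp.support_filter, Finset.mem_filter] at hμ
    obtain ⟨j, hj, hjμ⟩ := Finset.mem_biUnion.mp (Finsupp.support_finsetSum hμ.1)
    obtain ⟨t, ht, htμ⟩ := Finset.mem_biUnion.mp (Finsupp.support_finsetSum hjμ)
    obtain rfl := Finset.mem_singleton.mp (Finsupp.support_single_subset htμ)
    rw [Finset.mem_Icc] at hj
    rw [Finset.mem_Ico] at ht
    have hpos : ∀ x ∈ newtonPart (s + q + 1 - j) k (j * k) t, 0 < x :=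
      fun x => pos_of_mem_newtonPart (by omega)
    rw [Multiset.filter_eq_self.mpr hpos] at hμ
    refine ⟨⟨hpos, hμ.2⟩, ?_, (leadingMult_newtonPart (by omega) ht.1).trans_lt ht.2⟩
    rw [leadingPart_newtonPart ht.1]
    omega
  · rw [sum_filter_smul_mSym, ← Finsupp.sum_finsetSum_index (by simp) (by simp [add_smul])]
    refine congrArg _ (sum_congr rfl fun j _ => ?_)
    rw [← Finsupp.sum_finsetSum_index (by simp) (by simp [add_smul])]
    exact sum_congr rfl fun t _ =>
      (Finsupp.sum_single_index (h := fun μ (b : F) => b • mSym F n μ) (zero_smul F _)).symm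

/-- Lemma: generalized Newton formulas: with `p = char F > 0`, `p^i ≤ n`,
`n = q·p^i + r`, `0 ≤ r < p^i`, `q ≥ 1`, for every positive `s` one has
`∑_{j=1}^q (-1)^{j-1} m_{(1^{j·p^i})} m_{((s+q+1-j)^{p^i})} = m_{((s+q+1)^{p^i})} + ∑ a_μ m_μ`
with the `μ`'s partitions of length at most `n` with `lp(μ) ≥ s+1` and `lm(μ) < p^i`. -/
theorem newton_like (F : Type*) [Field F] (n : ℕ) (hn : 0 < n)
    (hp : 0 < ringChar F) (i : ℕ) (hpi : ringChar F ^ i ≤ n)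
    (q r : ℕ) (hq : 0 < q) (hnqr : n = q * ringChar F ^ i + r) (hr : r < ringChar F ^ i)
    (s : ℕ) (hs : 0 < s) :
    ∃ aC : Multiset ℕ →₀ F,
      (∀ mu ∈ aC.support, IsPartition n mu ∧ s + 1 ≤ leadingPart mu ∧
        leadingMult mu < ringChar F ^ i) ∧
      ∑ j ∈ Finset.Icc 1 q, (-1 : F) ^ (j - 1) •
        (mSym F n (Multiset.replicate (j * ringChar F ^ i) 1) *
          mSym F n (Multiset.replicate (ringChar F ^ i) (s + q + 1 - j))) =
      mSym F n (Multiset.replicate (ringChar F ^ i) (s + q + 1))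
        + aC.sum (fun mu c => c • mSym F n mu) :=
  newton_like_general F n i q r hnqr hr s hs
end
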